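/- Stability of the single-scattering attenuation factor: Let n ≥ 2, R > 0, δ ≥ 0, and let a, ã : ℝⁿ × S^{n-1} → [0,∞) be bounded measurable functions such that |ã(y,ω) − a(y,ω)| ≤ δ / τ(y,ω) for every y with |y| ≤ R and every unit vector ω. Define, for |x'| = R, ⟨x',θ'⟩ ≤ 0, 0 ≤ t ≤ τ₊(x',θ'), and θ ∈ S^{n-1}, F_a(t,x',θ',θ) := exp(−∫₀^{τ₊(x'+tθ', θ)} a(x'+tθ'+sθ, θ) ds) · exp(−∫₀^{t} a(x'+sθ', θ') ds), and F_ã analogously. Then |F_a(t,x',θ',θ) − F_ã(t,x',θ',θ)| ≤ 2δ. -/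

import Mathlib

/-- Forward exit time of the ball of radius `R`. -/
noncomputable def tauP {n : ℕ} (R : ℝ) (x θ : EuclideanSpace ℝ (Fin n)) : ℝ :=
  -(inner ℝ x θ : ℝ) + Real.sqrt (R ^ 2 - ‖x‖ ^ 2 + (inner ℝ x θ : ℝ) ^ 2)

/-- Backward exit time of the ball of radius `R`. -/
noncomputable def tauM {n : ℕ} (R : ℝ) (x θ : EuclideanSpace ℝ (Fin n)) : ℝ :=
  tauP R x (-θ)

/-- Chord length (total travel time) through the ball of radius `R`. -/
noncomputable def tauC {n : ℕ} (R : ℝ) (x θ : EuclideanSpace ℝ (Fin n)) : ℝ :=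
  tauM R x θ + tauP R x θ

/-- The single-scattering attenuation factor along the broken path entering at
`x'` in direction `θ'`, scattering at `x' + tθ'` into direction `θ`. -/
noncomputable def Fatt {n : ℕ} (R : ℝ)
    (a : EuclideanSpace ℝ (Fin n) → EuclideanSpace ℝ (Fin n) → ℝ)
    (t : ℝ) (x' θ' θ : EuclideanSpace ℝ (Fin n)) : ℝ :=
  Real.exp (-(∫ s in (0 : ℝ)..(tauP R (x' + t • θ') θ), a (x' + t • θ' + s • θ) θ)) *
    Real.exp (-(∫ s in (0 : ℝ)..t, a (x' + s • θ') θ'))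

/-!
Both legs of the broken path are chords of the ball, and the chord length `τ` is constant
along each of them. Hence integrating the pointwise bound `δ / τ` over a leg, whose length is
at most `τ`, gives at most `δ`. Since `u ↦ exp (-u)` is `1`-Lipschitz on `[0, ∞)`, the two
attenuation factors differ by at most `δ + δ`.
-/

open MeasureTheory Set Real
open scoped Interval

section Chords

variable {n : ℕ} {R : ℝ} {x θ : EuclideanSpace ℝ (Fin n)}

lemma inner_add_smul_self_right (hθ : ‖θ‖ = 1) (s : ℝ) :
    inner ℝ (x + s • θ) θ = inner ℝ x θ + s := by
  rw [inner_add_left, real_inner_smul_left, real_inner_self_eq_norm_sq, hθ, one_pow, mul_one]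

lemma norm_add_smul_sq (hθ : ‖θ‖ = 1) (s : ℝ) :
    ‖x + s • θ‖ ^ 2 = ‖x‖ ^ 2 + 2 * s * inner ℝ x θ + s ^ 2 := by
  rw [norm_add_sq_real, real_inner_smul_right, norm_smul, hθ, Real.norm_eq_abs, mul_one, sq_abs]
  ring

lemma tauP_add_smul (hθ : ‖θ‖ = 1) (s : ℝ) :
    tauP R (x + s • θ) θ = tauP R x θ - s := by
  rw [tauP, tauP, inner_add_smul_self_right hθ, norm_add_smul_sq hθ]
  ring_nf

lemma tauC_add_smul (hθ : ‖θ‖ = 1) (s : ℝ) : tauC R (x + s • θ) θ = tauC R x θ := by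
  have hback : tauP R (x + s • θ) (-θ) = tauP R x (-θ) + s := by
    have := tauP_add_smul (R := R) (x := x) ((norm_neg θ).trans hθ) (-s)
    rwa [neg_smul_neg, sub_neg_eq_add] at this
  rw [tauC, tauC, tauM, tauM, hback, tauP_add_smul hθ]
  ring

lemma abs_inner_le_sqrt (hx : ‖x‖ ≤ R) :
    |inner ℝ x θ| ≤ √(R ^ 2 - ‖x‖ ^ 2 + inner ℝ x θ ^ 2) := by
  rw [← Real.sqrt_sq_eq_abs]
  exact Real.sqrt_le_sqrt (by nlinarith [norm_nonneg x])

lemma tauP_nonneg (hx : ‖x‖ ≤ R) : 0 ≤ tauP R x θ := by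
  have := abs_inner_le_sqrt (θ := θ) hx
  rw [tauP]
  linarith [le_abs_self (inner ℝ x θ)]

lemma tauP_le_tauC (hx : ‖x‖ ≤ R) : tauP R x θ ≤ tauC R x θ :=
  le_add_of_nonneg_left (tauP_nonneg hx)

lemma norm_add_smul_le (hx : ‖x‖ ≤ R) (hθ : ‖θ‖ = 1) {s : ℝ} (hs₀ : 0 ≤ s)
    (hs : s ≤ tauP R x θ) : ‖x + s • θ‖ ≤ R := by
  set p := inner ℝ x θ
  have hp := abs_inner_le_sqrt (θ := θ) hx
  have hD : 0 ≤ R ^ 2 - ‖x‖ ^ 2 + p ^ 2 := by nlinarith [norm_nonneg x]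
  have hsp : (s + p) ^ 2 ≤ R ^ 2 - ‖x‖ ^ 2 + p ^ 2 := by
    rw [← Real.sq_sqrt hD]
    refine sq_le_sq' ?_ (by rw [tauP] at hs; linarith)
    linarith [neg_abs_le p]
  have hR : 0 ≤ R := (norm_nonneg x).trans hx
  rw [← sq_le_sq₀ (norm_nonneg _) hR, norm_add_smul_sq hθ]
  nlinarith

end Chords

section Attenuation

variable {E : Type*} [NormedAddCommGroup E] [NormedSpace ℝ E] [MeasurableSpace E]
  [BorelSpace E]

lemma intervalIntegrable_along_line {a : E → E → ℝ} (hmeas : Measurable (Function.uncurry a))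
    (h0 : ∀ y ω, 0 ≤ a y ω) (hbdd : ∃ M, ∀ y ω, a y ω ≤ M) (x θ : E) (T : ℝ) :
    IntervalIntegrable (fun s => a (x + s • θ) θ) volume 0 T := by
  obtain ⟨M, hM⟩ := hbdd
  have hline : Measurable fun s : ℝ => (x + s • θ, θ) :=
    (continuous_const.add (continuous_id.smul continuous_const)).measurable.prodMk
      measurable_const
  rw [intervalIntegrable_iff]
  exact Measure.integrableOn_of_bounded measure_Ioc_lt_top.ne
    (hmeas.comp hline).aestronglyMeasurable
    (ae_of_all _ fun s => (Real.norm_of_nonneg (h0 _ _)).trans_le (hM _ _))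

end Attenuation

lemma abs_exp_neg_sub_exp_neg_le {u v : ℝ} (hu : 0 ≤ u) (hv : 0 ≤ v) :
    |exp (-u) - exp (-v)| ≤ |u - v| := by
  wlog huv : u ≤ v generalizing u v
  · rw [abs_sub_comm, abs_sub_comm u]
    exact this hv hu (le_of_not_ge huv)
  have hexp : exp (-v) = exp (-u) * exp (-(v - u)) := by rw [← exp_add]; ring_nf
  rw [abs_of_nonneg (sub_nonneg.2 (exp_le_exp.2 (neg_le_neg huv))),
    abs_of_nonpos (sub_nonpos.2 huv), hexp]
  calc exp (-u) - exp (-u) * exp (-(v - u)) = exp (-u) * (1 - exp (-(v - u))) := by ring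
    _ ≤ 1 * (v - u) :=
        mul_le_mul (exp_le_one_iff.2 (neg_nonpos.2 hu))
          (by linarith [one_sub_le_exp_neg (v - u)])
          (sub_nonneg.2 (exp_le_one_iff.2 (by linarith))) zero_le_one
    _ = -(u - v) := by ring

lemma abs_integral_sub_le_of_abs_sub_le_div_tauC {n : ℕ} {R δ : ℝ}
    {a a' : EuclideanSpace ℝ (Fin n) → EuclideanSpace ℝ (Fin n) → ℝ} (hδ : 0 ≤ δ)
    (hclose : ∀ y ω : EuclideanSpace ℝ (Fin n), ‖y‖ ≤ R → ‖ω‖ = 1 →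
      |a' y ω - a y ω| ≤ δ / tauC R y ω)
    {x θ : EuclideanSpace ℝ (Fin n)} (hx : ‖x‖ ≤ R) (hθ : ‖θ‖ = 1) {T : ℝ} (hT₀ : 0 ≤ T)
    (hT : T ≤ tauP R x θ)
    (hf : IntervalIntegrable (fun s => a (x + s • θ) θ) volume 0 T)
    (hf' : IntervalIntegrable (fun s => a' (x + s • θ) θ) volume 0 T) :
    |(∫ s in (0 : ℝ)..T, a' (x + s • θ) θ) - ∫ s in (0 : ℝ)..T, a (x + s • θ) θ| ≤ δ := by
  have hpointwise : ∀ s ∈ Ι 0 T, ‖a' (x + s • θ) θ - a (x + s • θ) θ‖ ≤ δ / tauC R x θ := by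
    intro s hs
    rw [uIoc_of_le hT₀] at hs
    rw [← tauC_add_smul (R := R) hθ s]
    exact hclose _ _ (norm_add_smul_le hx hθ hs.1.le (hs.2.trans hT)) hθ
  have hTτ : T ≤ tauC R x θ := hT.trans (tauP_le_tauC hx)
  calc _ = ‖∫ s in (0 : ℝ)..T, a' (x + s • θ) θ - a (x + s • θ) θ‖ := by
        rw [intervalIntegral.integral_sub hf' hf, Real.norm_eq_abs]
    _ ≤ δ / tauC R x θ * |T - 0| := intervalIntegral.norm_integral_le_of_norm_le_const hpointwise
    _ = δ * (T / tauC R x θ) := by rw [sub_zero, abs_of_nonneg hT₀]; ring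
    _ ≤ δ := mul_le_of_le_one_right hδ (div_le_one_of_le₀ hTτ (hT₀.trans hTτ))

theorem single_scattering_stability {n : ℕ} (R δ : ℝ)
    (hδ : 0 ≤ δ)
    (a a' : EuclideanSpace ℝ (Fin n) → EuclideanSpace ℝ (Fin n) → ℝ)
    (ha0 : ∀ y ω, 0 ≤ a y ω) (ha0' : ∀ y ω, 0 ≤ a' y ω)
    (habd : ∃ M, ∀ y ω, a y ω ≤ M) (habd' : ∃ M, ∀ y ω, a' y ω ≤ M)
    (hameas : Measurable (Function.uncurry a))
    (hameas' : Measurable (Function.uncurry a'))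
    (hclose : ∀ y ω : EuclideanSpace ℝ (Fin n), ‖y‖ ≤ R → ‖ω‖ = 1 →
      |a' y ω - a y ω| ≤ δ / tauC R y ω) :
    ∀ (x' θ' θ : EuclideanSpace ℝ (Fin n)) (t : ℝ),
      ‖x'‖ = R → ‖θ'‖ = 1 → (inner ℝ x' θ' : ℝ) ≤ 0 →
      0 ≤ t → t ≤ tauP R x' θ' → ‖θ‖ = 1 →
      |Fatt R a t x' θ' θ - Fatt R a' t x' θ' θ| ≤ 2 * δ := by
  intro x' θ' θ t hx' hθ' _ ht₀ ht hθ
  have hxR : ‖x' + t • θ'‖ ≤ R := norm_add_smul_le hx'.le hθ' ht₀ ht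
  have hT₀ : 0 ≤ tauP R (x' + t • θ') θ := tauP_nonneg hxR
  have hleg₁ := abs_integral_sub_le_of_abs_sub_le_div_tauC hδ hclose hxR hθ hT₀ le_rfl
    (intervalIntegrable_along_line hameas ha0 habd _ _ _)
    (intervalIntegrable_along_line hameas' ha0' habd' _ _ _)
  have hleg₂ := abs_integral_sub_le_of_abs_sub_le_div_tauC hδ hclose hx'.le hθ' ht₀ ht
    (intervalIntegrable_along_line hameas ha0 habd _ _ _)
    (intervalIntegrable_along_line hameas' ha0' habd' _ _ _)
  rw [Fatt, Fatt, ← exp_add, ← exp_add, ← neg_add, ← neg_add]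
  calc _ ≤ |_ - _| := abs_exp_neg_sub_exp_neg_le
        (add_nonneg (intervalIntegral.integral_nonneg hT₀ fun _ _ => ha0 _ _)
          (intervalIntegral.integral_nonneg ht₀ fun _ _ => ha0 _ _))
        (add_nonneg (intervalIntegral.integral_nonneg hT₀ fun _ _ => ha0' _ _)
          (intervalIntegral.integral_nonneg ht₀ fun _ _ => ha0' _ _))
    _ ≤ δ + δ := by
        rw [abs_sub_comm, add_sub_add_comm]
        exact (abs_add_le _ _).trans (add_le_add hleg₁ hleg₂)
    _ = 2 * δ := (two_mul δ).symm
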